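/- Let p: ℝ → ℝ be smooth and 2π-periodic with p''(α) + p(α) > 0 for all α, and define γ(α) := p'(α)e_α − p(α)Je_α and L(α₁,α₂) := ω(γ(α₁),γ(α₂)). Then L₁₂(α₁,α₂) = (p''(α₁)+p(α₁))(p''(α₂)+p(α₂)) sin(α₂ − α₁); in particular L₁₂(α₁,α₂) > 0 whenever 0 < α₂ − α₁ < π (the positive twist condition). -/

import Mathlib

open Real

/-- The standard area form on ℝ². -/
noncomputable def om (u v : ℝ × ℝ) : ℝ := u.1 * v.2 - v.1 * u.2

/-- The unit vector forming angle α with (0,1). -/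
noncomputable def eVec (α : ℝ) : ℝ × ℝ := (-Real.sin α, Real.cos α)

/-- Rotation by π/2 in the positive sense. -/
def Jrot (v : ℝ × ℝ) : ℝ × ℝ := (-v.2, v.1)

/-- L₁₂(α₁,α₂) = (p''(α₁)+p(α₁))(p''(α₂)+p(α₂)) sin(α₂-α₁); in particular the
positive twist condition holds for 0 < α₂ - α₁ < π. -/
theorem L12_support_function_and_twist
    (p : ℝ → ℝ) (hp : ContDiff ℝ (⊤ : ℕ∞) p) (hper : ∀ α, p (α + 2 * π) = p α)
    (hcurv : ∀ α, 0 < deriv (deriv p) α + p α)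
    (γ : ℝ → ℝ × ℝ)
    (hγ : ∀ α, γ α = deriv p α • eVec α - p α • Jrot (eVec α)) :
    (∀ α₁ α₂ : ℝ, om (deriv γ α₁) (deriv γ α₂)
        = (deriv (deriv p) α₁ + p α₁) * (deriv (deriv p) α₂ + p α₂)
          * Real.sin (α₂ - α₁)) ∧
    (∀ α₁ α₂ : ℝ, 0 < α₂ - α₁ → α₂ - α₁ < π →
        0 < om (deriv γ α₁) (deriv γ α₂)) := by
  have hpi : ContDiff ℝ (⊤ : ℕ∞) p := hp.of_le (by simp)
  have hp' : ContDiff ℝ (⊤ : ℕ∞) (deriv p) := (contDiff_infty_iff_deriv.mp hpi).2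
  have hγeq : γ = fun α => (deriv p α * (-Real.sin α) + p α * Real.cos α,
      deriv p α * Real.cos α + p α * Real.sin α) := by
    funext x
    rw [hγ x]
    simp [eVec, Jrot, Prod.ext_iff, smul_eq_mul]
  have hd : ∀ α, HasDerivAt γ ((deriv (deriv p) α + p α) • eVec α) α := by
    intro α
    rw [hγeq]
    have hps : HasDerivAt p (deriv p α) α :=
      ((hpi.differentiable (by simp)) α).hasDerivAt
    have hps' : HasDerivAt (deriv p) (deriv (deriv p) α) α :=
      ((hp'.differentiable (by simp)) α).hasDerivAt
    have h1 : HasDerivAt (fun x => deriv p x * (-Real.sin x) + p x * Real.cos x)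
        ((deriv (deriv p) α + p α) * (-Real.sin α)) α := by
      have := (hps'.mul (Real.hasDerivAt_sin α).neg).add (hps.mul (Real.hasDerivAt_cos α))
      exact this.congr_deriv (by simp; ring)
    have h2 : HasDerivAt (fun x => deriv p x * Real.cos x + p x * Real.sin x)
        ((deriv (deriv p) α + p α) * Real.cos α) α := by
      have := (hps'.mul (Real.hasDerivAt_cos α)).add (hps.mul (Real.hasDerivAt_sin α))
      exact this.congr_deriv (by ring)
    have := h1.prodMk h2
    convert this using 1
    simp [eVec]
  have hdγ : ∀ α, deriv γ α = (deriv (deriv p) α + p α) • eVec α :=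
    fun α => (hd α).deriv
  have key : ∀ α₁ α₂ : ℝ, om (deriv γ α₁) (deriv γ α₂)
      = (deriv (deriv p) α₁ + p α₁) * (deriv (deriv p) α₂ + p α₂)
        * Real.sin (α₂ - α₁) := by
    intro α₁ α₂
    rw [hdγ, hdγ, Real.sin_sub]
    simp [om, eVec, smul_eq_mul]
    ring
  refine ⟨key, fun α₁ α₂ h1 h2 => ?_⟩
  rw [key]
  exact mul_pos (mul_pos (hcurv α₁) (hcurv α₂)) (Real.sin_pos_of_pos_of_lt_pi h1 h2)
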